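/- Let N ≥ 2 be an integer and z : ℤ/Nℤ → ℂ a function with z(−a) = −z(a) for all a. For each positive divisor d of N with N_d = N/d > 2, choose a set T_d ⊆ (ℤ/N_dℤ)^× of representatives for the quotient (ℤ/N_dℤ)^×/{±1}. Then det(S_N·Z_N) = ∏_{d | N, N_d > 2} det(G_d), where G_d is the square matrix indexed by u, v ∈ T_d whose (u,v)-entry is d·ẑ_d(u·v^{−1}). -/

import Mathlib

/-
Folding by oddness, the `(m, n)` entry of `S_N Z_N` is half of the full sum
`sinSum N z a b = Σ_{k mod N} sin(2πak/N) z(kb)` with `a = m + 1`, `b = n + 1`. Its factor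
`z(kb)` is periodic in `k` with period `N / gcd(b, N)`, whereas `k ↦ e^{±2πiak/N}` is not
unless `gcd(b, N) ∣ a`; hence the entry vanishes unless `gcd(n + 1, N) ∣ m + 1`, and ordering
the indices by decreasing `gcd(m + 1, N)` makes the matrix block triangular, with one block for
each divisor `d` with `N/d > 2`. On the block `gcd(m + 1, N) = d` write `a = dq`, `b = dq'`:
the summand only depends on `k mod N/d`, and substituting `k ↦ k q'⁻¹` turns the sum into
`2d ẑ_d(q q'⁻¹)`. The `q` are the units `u` mod `N/d` with `2u < N/d`, one of each pair `±u`;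
passing to another system of representatives conjugates the block by a diagonal sign matrix,
because `ẑ_d` is odd.
-/

/-- The discrete sine matrix `S_N`, of size `N⁻ × N⁻` with `N⁻ = ⌊(N−1)/2⌋`. -/
noncomputable def sinMatrix (N : ℕ) : Matrix (Fin ((N - 1) / 2)) (Fin ((N - 1) / 2)) ℝ :=
  Matrix.of fun m n => Real.sin (2 * Real.pi * ((m : ℕ) + 1) * ((n : ℕ) + 1) / N)

/-- The matrix `Z_N` attached to an odd function `z : ℤ/Nℤ → ℂ`. -/
def ZMat (N : ℕ) (z : ZMod N → ℂ) : Matrix (Fin ((N - 1) / 2)) (Fin ((N - 1) / 2)) ℂ :=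
  Matrix.of fun i j => z ((((i : ℕ) + 1) : ZMod N) * (((j : ℕ) + 1) : ZMod N))

/-- `ẑ_d(t) = (1/2)·Σ_{r=1}^{N_d} z(dr mod N)·sin(2πtr/N_d)`, where `N_d = N/d`. -/
noncomputable def zhat (N d : ℕ) (z : ZMod N → ℂ) (t : ZMod (N / d)) : ℂ :=
  (1 / 2 : ℂ) * ∑ r ∈ Finset.Icc 1 (N / d),
    z (((d * r : ℕ) : ZMod N)) *
      (Real.sin (2 * Real.pi * (ZMod.val t) * r / ((N / d : ℕ) : ℝ)) : ℝ)

open Finset Complex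

noncomputable def sinZMod (n : ℕ) (t : ZMod n) : ℝ := Real.sin (2 * Real.pi * t.val / n)

namespace sinZMod

variable {n : ℕ} [NeZero n]

lemma ofReal_eq (t : ZMod n) :
    (sinZMod n t : ℂ) = (ZMod.stdAddChar t - ZMod.stdAddChar (-t)) / (2 * I) := by
  rw [sinZMod, ofReal_sin, Complex.sin, AddChar.map_neg_eq_inv, ZMod.stdAddChar_apply,
    ZMod.toCircle_apply, ← Complex.exp_neg]
  field_simp
  push_cast
  ring_nf
  rw [I_sq]
  ring

lemma natCast (a : ℕ) : sinZMod n a = Real.sin (2 * Real.pi * a / n) := by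
  apply ofReal_injective
  rw [ofReal_eq, ofReal_sin, Complex.sin, AddChar.map_neg_eq_inv, ZMod.stdAddChar_apply,
    ZMod.toCircle_natCast, ← Complex.exp_neg]
  field_simp
  push_cast
  ring_nf
  rw [I_sq]
  ring

lemma neg (t : ZMod n) : sinZMod n (-t) = -sinZMod n t := by
  apply ofReal_injective
  rw [ofReal_neg, ofReal_eq, ofReal_eq, neg_neg]
  ring

lemma eq_zero_of_neg_eq {t : ZMod n} (h : -t = t) : sinZMod n t = 0 := by
  have := sinZMod.neg t
  rw [h] at this
  linarith

end sinZMod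

lemma AddChar.sum_mul_eq_zero_of_periodic {G R : Type*} [AddGroup G] [Fintype G] [CommRing R]
    [IsDomain R] (ψ : AddChar G R) {F : G → R} {h : G} (hF : ∀ k, F (k + h) = F k)
    (hψ : ψ h ≠ 1) : ∑ k, ψ k * F k = 0 := by
  have hshift : ∑ k, ψ k * F k = ψ h * ∑ k, ψ k * F k := by
    rw [mul_sum, ← Fintype.sum_equiv (Equiv.addRight h) _ _ fun k => rfl]
    simp only [Equiv.coe_addRight, AddChar.map_add_eq_mul, hF]
    exact sum_congr rfl fun k _ => by ring
  have := sub_eq_zero.2 hshift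
  rw [← one_sub_mul] at this
  exact (mul_eq_zero.1 this).resolve_left (sub_ne_zero.2 hψ.symm)

lemma AddMonoidHom.sum_comp_of_surjective {G H R : Type*} [AddGroup G] [Fintype G] [AddGroup H]
    [Fintype H] [DecidableEq H] [AddCommMonoid R] (f : G →+ H) (hf : Function.Surjective f)
    (F : H → R) : ∑ g, F (f g) = (Fintype.card G / Fintype.card H) • ∑ h, F h := by
  classical
  have hfiber : ∀ h, #{g | f g = h} = #{g | f g = 0} := fun h =>
    AddMonoidHom.card_fiber_eq_of_mem_range f (hf h) (hf 0)
  have hcard : Fintype.card G = Fintype.card H * #{g | f g = 0} := by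
    rw [← card_univ, card_eq_sum_card_fiberwise fun g _ => mem_univ (f g),
      sum_congr rfl fun h _ => hfiber h, sum_const, card_univ, smul_eq_mul]
  rw [← sum_fiberwise' univ f F, hcard, Nat.mul_div_cancel_left _ Fintype.card_pos, smul_sum]
  exact sum_congr rfl fun h _ => by rw [sum_const, hfiber]

lemma ZMod.val_natCast_succ_of_lt_half {N : ℕ} (j : Fin ((N - 1) / 2)) :
    (((j : ℕ) + 1 : ℕ) : ZMod N).val = j + 1 :=
  ZMod.val_cast_of_lt (by omega)

lemma ZMod.sum_eq_two_nsmul_sum_half {N : ℕ} [NeZero N] {R : Type*} [AddCommMonoid R]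
    (f : ZMod N → R) (heven : ∀ k, f (-k) = f k) (htors : ∀ k, -k = k → f k = 0) :
    ∑ k, f k = 2 • ∑ j : Fin ((N - 1) / 2), f ((j : ℕ) + 1) := by
  classical
  set P : ZMod N → Prop := fun k => 1 ≤ k.val ∧ 2 * k.val < N with hP
  -- Exactly one of `P k`, `P (-k)`, `-k = k` holds.
  have hsplit : ∀ k, f k = (if P k then f k else 0) + (if P (-k) then f k else 0) := by
    intro k
    rcases eq_or_ne k 0 with rfl | hk
    · simp [htors 0 neg_zero]
    have hneg : (-k).val = N - k.val := by rw [ZMod.neg_val, if_neg hk]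
    have hk0 : k.val ≠ 0 := (ZMod.val_ne_zero k).2 hk
    have hkN := ZMod.val_lt k
    rcases lt_trichotomy (2 * k.val) N with h | h | h
    · rw [if_pos ⟨by omega, h⟩, if_neg (by simp only [hP, hneg]; omega), add_zero]
    · have hself : -k = k := ZMod.val_injective N (by omega)
      simp [htors k hself]
    · rw [if_neg (by simp only [hP]; omega), if_pos (by simp only [hP, hneg]; omega), zero_add]
  have hreflect : ∑ k, (if P (-k) then f k else 0) = ∑ k, (if P k then f k else 0) :=
    Fintype.sum_equiv (Equiv.neg _) _ _ fun k => by rw [Equiv.neg_apply, heven]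
  have hhalf : ∑ k, (if P k then f k else 0) = ∑ j : Fin ((N - 1) / 2), f ((j : ℕ) + 1) := by
    rw [← sum_filter]
    symm
    refine sum_bij' (fun j _ => ((j : ℕ) + 1 : ℕ)) (fun k hk => ⟨k.val - 1, ?_⟩)
      ?_ ?_ ?_ ?_ ?_
    · have hk' := (mem_filter.1 hk).2
      simp only [hP] at hk'
      omega
    · intro j _
      simp only [mem_filter, mem_univ, true_and, hP, ZMod.val_natCast_succ_of_lt_half]
      omega
    · exact fun _ _ => mem_univ _
    · intro j _
      simp only [ZMod.val_natCast_succ_of_lt_half, Nat.add_sub_cancel]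
    · intro k hk
      have hk' := (mem_filter.1 hk).2
      simp only [hP] at hk'
      rw [Nat.sub_add_cancel hk'.1, ZMod.natCast_zmod_val]
    · intro j _
      push_cast
      rfl
  rw [Fintype.sum_congr _ _ hsplit, sum_add_distrib, hreflect, hhalf, two_nsmul]

lemma ZMod.sum_Icc_one_natCast {M : ℕ} [NeZero M] {R : Type*} [AddCommMonoid R]
    (g : ZMod M → R) : ∑ r ∈ Icc 1 M, g r = ∑ x, g x := by
  refine sum_nbij' (fun r => (r : ZMod M)) (fun x => (x - 1).val + 1) (fun _ _ => mem_univ _)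
    (fun x _ => mem_Icc.2 ⟨Nat.le_add_left _ _, ZMod.val_lt _⟩) (fun r hr => ?_) (fun x _ => ?_)
    (fun _ _ => rfl)
  · obtain ⟨hr1, hrM⟩ := mem_Icc.1 hr
    rw [← Nat.cast_pred hr1, ZMod.val_cast_of_lt (by omega), Nat.sub_add_cancel hr1]
  · push_cast
    rw [ZMod.natCast_zmod_val, sub_add_cancel]

lemma ZMod.natCast_mul_mod_div {N d : ℕ} (hd : d ∣ N) (r : ℕ) :
    ((d * (r % (N / d)) : ℕ) : ZMod N) = ((d * r : ℕ) : ZMod N) := by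
  conv_rhs => rw [← Nat.mod_add_div r (N / d), mul_add, ← mul_assoc, Nat.mul_div_cancel' hd]
  rw [Nat.cast_add, Nat.cast_mul N, ZMod.natCast_self, zero_mul, add_zero]

lemma ZMod.natCast_mul_val_cast {N d : ℕ} [NeZero N] (hd : d ∣ N) (y : ZMod N) :
    ((d * (ZMod.cast y : ZMod (N / d)).val : ℕ) : ZMod N) = d * y := by
  rw [ZMod.cast_eq_val, ZMod.val_natCast, ZMod.natCast_mul_mod_div hd, Nat.cast_mul,
    ZMod.natCast_zmod_val]

noncomputable def sinSum (N : ℕ) [NeZero N] (z : ZMod N → ℂ) (a b : ZMod N) : ℂ :=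
  ∑ k, (sinZMod N (a * k) : ℂ) * z (k * b)

lemma sinSum_eq_zero {N : ℕ} [NeZero N] (z : ZMod N → ℂ) {a b h : ZMod N} (hb : h * b = 0)
    (ha : a * h ≠ 0) : sinSum N z a b = 0 := by
  have hF : ∀ k, z ((k + h) * b) = z (k * b) := fun k => by rw [add_mul, hb, add_zero]
  have hψ : ∀ c : ZMod N, c * h ≠ 0 → (ZMod.stdAddChar (N := N)).mulShift c h ≠ 1 := by
    intro c hc
    rwa [AddChar.mulShift_apply, ← AddChar.map_zero_eq_one (ZMod.stdAddChar (N := N)),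
      ZMod.injective_stdAddChar.ne_iff]
  have hpos := AddChar.sum_mul_eq_zero_of_periodic _ (F := fun k => z (k * b)) hF (hψ a ha)
  have hneg := AddChar.sum_mul_eq_zero_of_periodic _ (F := fun k => z (k * b)) hF
    (hψ (-a) (by rwa [neg_mul, neg_ne_zero]))
  simp only [AddChar.mulShift_apply, neg_mul] at hpos hneg
  simp only [sinSum, sinZMod.ofReal_eq, sub_div, sub_mul, sum_sub_distrib, div_mul_eq_mul_div,
    ← sum_div, hpos, hneg, sub_zero, zero_div]

lemma sinMatrix_mul_ZMat_apply {N : ℕ} [NeZero N] {z : ZMod N → ℂ} (hz : ∀ a, z (-a) = -z a)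
    (m n : Fin ((N - 1) / 2)) :
    ((sinMatrix N).map (fun r => (r : ℂ)) * ZMat N z) m n =
      sinSum N z ((m : ℕ) + 1) ((n : ℕ) + 1) / 2 := by
  set a : ZMod N := (m : ℕ) + 1
  set b : ZMod N := (n : ℕ) + 1
  have hfold := ZMod.sum_eq_two_nsmul_sum_half (fun k => (sinZMod N (a * k) : ℂ) * z (k * b))
    (fun k => by rw [mul_neg, sinZMod.neg, neg_mul, hz, ofReal_neg, neg_mul_neg])
    (fun k hk => by rw [sinZMod.eq_zero_of_neg_eq (by rw [← mul_neg, hk]), ofReal_zero, zero_mul])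
  rw [sinSum, hfold, two_nsmul, add_self_div_two, Matrix.mul_apply]
  refine sum_congr rfl fun j _ => ?_
  have hsin : sinZMod N (a * ((j : ℕ) + 1)) =
      Real.sin (2 * Real.pi * ((m : ℕ) + 1) * ((j : ℕ) + 1) / N) := by
    rw [show a * ((j : ℕ) + 1) = (((m + 1) * (j + 1) : ℕ) : ZMod N) by push_cast; rfl,
      sinZMod.natCast]
    push_cast
    ring_nf
  simp only [sinMatrix, ZMat, Matrix.map_apply, Matrix.of_apply, hsin]
  rfl

lemma sinSum_natCast_eq_zero {N : ℕ} [NeZero N] (z : ZMod N → ℂ) {a b : ℕ}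
    (h : ¬ Nat.gcd b N ∣ a) : sinSum N z a b = 0 := by
  set g := Nat.gcd b N
  have hgN : g * (N / g) = N := Nat.mul_div_cancel' (Nat.gcd_dvd_right b N)
  have hpos : 0 < N / g :=
    Nat.div_pos (Nat.gcd_le_right _ (NeZero.pos N)) (Nat.gcd_pos_of_pos_right _ (NeZero.pos N))
  refine sinSum_eq_zero z (h := ((N / g : ℕ) : ZMod N)) ?_ ?_
  · rw [← Nat.cast_mul, ZMod.natCast_eq_zero_iff, mul_comm]
    nth_rw 1 [← hgN]
    exact mul_dvd_mul_right (Nat.gcd_dvd_left b N) _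
  · rw [← Nat.cast_mul, Ne, ZMod.natCast_eq_zero_iff]
    nth_rw 1 [← hgN]
    exact fun hdvd => h (Nat.dvd_of_mul_dvd_mul_right hpos hdvd)

-- Reversed order: the entry `(m, n)` can only be nonzero when `gcd(n + 1, N) ≤ gcd(m + 1, N)`.
def gcdLevel (N : ℕ) (m : Fin ((N - 1) / 2)) : ℕᵒᵈ :=
  OrderDual.toDual (Nat.gcd ((m : ℕ) + 1) N)

lemma blockTriangular_sinMatrix_mul_ZMat {N : ℕ} [NeZero N] {z : ZMod N → ℂ}
    (hz : ∀ a, z (-a) = -z a) :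
    ((sinMatrix N).map (fun r => (r : ℂ)) * ZMat N z).BlockTriangular (gcdLevel N) := by
  intro i j hij
  have hnd : ¬ Nat.gcd ((j : ℕ) + 1) N ∣ (i : ℕ) + 1 := fun hdvd =>
    (Nat.le_of_dvd (Nat.gcd_pos_of_pos_right _ (NeZero.pos N))
      (Nat.dvd_gcd hdvd (Nat.gcd_dvd_right _ _))).not_gt hij
  have hzero := sinSum_natCast_eq_zero z hnd
  push_cast at hzero
  rw [sinMatrix_mul_ZMat_apply hz, hzero, zero_div]

section divisor

variable {N d : ℕ} [NeZero (N / d)]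

lemma zhat_eq_sum (hd : d ∣ N) (z : ZMod N → ℂ) (t : ZMod (N / d)) :
    zhat N d z t =
      (∑ r : ZMod (N / d), z ((d * r.val : ℕ) : ZMod N) * sinZMod (N / d) (t * r)) / 2 := by
  rw [zhat, ← ZMod.sum_Icc_one_natCast, one_div_mul_eq_div]
  congr 1
  refine sum_congr rfl fun r _ => ?_
  have harg : t * r = ((t.val * r : ℕ) : ZMod (N / d)) := by
    rw [Nat.cast_mul, ZMod.natCast_zmod_val]
  rw [ZMod.val_natCast, ZMod.natCast_mul_mod_div hd, harg, sinZMod.natCast]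
  push_cast
  ring_nf

lemma zhat_neg (hd : d ∣ N) (z : ZMod N → ℂ) (t : ZMod (N / d)) :
    zhat N d z (-t) = -zhat N d z t := by
  simp only [zhat_eq_sum hd, neg_mul, sinZMod.neg, ofReal_neg, mul_neg, sum_neg_distrib, neg_div]

variable [NeZero N]

lemma sinZMod.natCast_mul (hd : d ∣ N) (x : ZMod N) :
    sinZMod N (d * x) = sinZMod (N / d) (ZMod.cast x) := by
  have hd0 : (d : ℝ) ≠ 0 := Nat.cast_ne_zero.2 (ne_zero_of_dvd_ne_zero (NeZero.ne N) hd)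
  rw [← ZMod.natCast_zmod_val x, ZMod.cast_natCast (Nat.div_dvd_of_dvd hd), ← Nat.cast_mul,
    sinZMod.natCast, sinZMod.natCast, Nat.cast_div hd hd0]
  push_cast
  field_simp

lemma sinSum_mul_mul (hd : d ∣ N) (z : ZMod N → ℂ) (a b : ZMod N) :
    sinSum N z (d * a) (d * b) = d * ∑ r : ZMod (N / d),
      (sinZMod (N / d) (ZMod.cast a * r) : ℂ) *
        z ((d * (r * ZMod.cast b).val : ℕ) : ZMod N) := by
  have hdvd := Nat.div_dvd_of_dvd hd
  have hfiber := AddMonoidHom.sum_comp_of_surjective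
    (ZMod.castHom hdvd (ZMod (N / d))).toAddMonoidHom (ZMod.castHom_surjective hdvd)
    fun r => (sinZMod (N / d) (ZMod.cast a * r) : ℂ) *
      z ((d * (r * ZMod.cast b).val : ℕ) : ZMod N)
  rw [ZMod.card, ZMod.card, Nat.div_div_self hd (NeZero.ne N), nsmul_eq_mul] at hfiber
  rw [sinSum, ← hfiber]
  refine sum_congr rfl fun k _ => ?_
  simp only [RingHom.toAddMonoidHom_eq_coe, AddMonoidHom.coe_coe, ZMod.castHom_apply,
    ← ZMod.cast_mul hdvd, ZMod.natCast_mul_val_cast hd, ← sinZMod.natCast_mul hd]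
  ring_nf

lemma sinSum_mul_mul_eq_zhat (hd : d ∣ N) (z : ZMod N → ℂ) (a b : ZMod N)
    (u : (ZMod (N / d))ˣ) (hb : (ZMod.cast b : ZMod (N / d)) = u) :
    sinSum N z (d * a) (d * b) = 2 * d * zhat N d z (ZMod.cast a * ↑u⁻¹) := by
  rw [sinSum_mul_mul hd, zhat_eq_sum hd, hb,
    show ∀ S : ℂ, 2 * (d : ℂ) * (S / 2) = d * S from fun S => by ring]
  congr 1
  refine Fintype.sum_equiv (Units.mulRight u) _ _ fun r => ?_
  rw [Units.mulRight_apply, mul_comm]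
  congr 3
  rw [mul_left_comm _ r, Units.inv_mul_cancel_right, mul_comm]

end divisor

def IsSignRepresentatives {G : Type*} [Neg G] (T : Finset G) : Prop :=
  ∀ w : G, ∃! u, u ∈ T ∧ (u = w ∨ u = -w)

def groupMatrix {G K : Type*} [Group G] (φ : G → K) (T : Finset G) :
    Matrix {u // u ∈ T} {u // u ∈ T} K :=
  Matrix.of fun u v => φ ((u : G) * (v : G)⁻¹)

lemma IsSignRepresentatives.exists_equiv {G : Type*} [InvolutiveNeg G] {T T' : Finset G}
    (hT : IsSignRepresentatives T) (hT' : IsSignRepresentatives T') :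
    ∃ e : {u // u ∈ T'} ≃ {t // t ∈ T}, ∀ u, (e u : G) = u ∨ (e u : G) = -u := by
  have hsymm : ∀ x y : G, x = y ∨ x = -y → y = x ∨ y = -x := fun x y h =>
    h.imp Eq.symm fun h => by rw [h, neg_neg]
  have hrep : ∀ u : {u // u ∈ T'}, ∃ t : {t // t ∈ T}, (t : G) = u ∨ (t : G) = -u :=
    fun u =>
      let ⟨t, ⟨htT, ht⟩, _⟩ := hT u
      ⟨⟨t, htT⟩, ht⟩
  choose e he using hrep
  have hinj : Function.Injective e := by
    intro u v huv
    have hv := hsymm _ _ (he v)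
    rw [← huv] at hv
    exact Subtype.ext ((hT' (e u)).unique ⟨u.2, hsymm _ _ (he u)⟩ ⟨v.2, hv⟩)
  have hsurj : Function.Surjective e := by
    intro t
    obtain ⟨u, ⟨huT', hu⟩, _⟩ := hT' t
    exact ⟨⟨u, huT'⟩, Subtype.ext
      ((hT u).unique ⟨(e ⟨u, huT'⟩).2, he ⟨u, huT'⟩⟩ ⟨t.2, hsymm _ _ hu⟩)⟩
  exact ⟨Equiv.ofBijective e ⟨hinj, hsurj⟩, he⟩

theorem det_groupMatrix_eq {G K : Type*} [Group G] [HasDistribNeg G] [DecidableEq G] [CommRing K]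
    {φ : G → K} (hφ : ∀ g, φ (-g) = -φ g) {T T' : Finset G} (hT : IsSignRepresentatives T)
    (hT' : IsSignRepresentatives T') : (groupMatrix φ T).det = (groupMatrix φ T').det := by
  obtain ⟨e, he⟩ := hT.exists_equiv hT'
  have hsign : ∀ u, ∃ σ : K, σ * σ = 1 ∧
      ∀ g, φ (e u * g) = σ * φ (u * g) ∧
        φ (g * (e u : G)⁻¹) = σ * φ (g * (u : G)⁻¹) := by
    intro u
    rcases he u with h | h
    · exact ⟨1, one_mul 1, fun g => by simp only [h, one_mul, and_self]⟩
    · exact ⟨-1, by rw [neg_one_mul, neg_neg], fun g => by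
        simp only [h, neg_mul, inv_neg, mul_neg, hφ, one_mul, and_self]⟩
  choose s hs_sq hs using hsign
  have hconj : (groupMatrix φ T).submatrix e e =
      Matrix.diagonal s * groupMatrix φ T' * Matrix.diagonal s := by
    ext u v
    simp only [Matrix.mul_diagonal, Matrix.diagonal_mul, Matrix.submatrix_apply, groupMatrix,
      Matrix.of_apply]
    rw [(hs u _).1, (hs v _).2]
    ring
  rw [← Matrix.det_submatrix_equiv_self e, hconj, Matrix.det_mul, Matrix.det_mul,
    Matrix.det_diagonal, mul_right_comm, ← prod_mul_distrib, prod_eq_one fun u _ => hs_sq u,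
    one_mul]

def halfUnits (M : ℕ) [NeZero M] : Finset (ZMod M)ˣ := {u | 2 * (u : ZMod M).val < M}

lemma isSignRepresentatives_halfUnits {M : ℕ} [NeZero M] (hM : 2 < M) :
    IsSignRepresentatives (halfUnits M) := by
  intro w
  have hcop := ZMod.val_coe_unit_coprime w
  set v := (w : ZMod M).val
  have hv0 : v ≠ 0 := fun h => by rw [h, Nat.coprime_zero_left] at hcop; omega
  have hv2 : 2 * v ≠ M := fun h => by have := hcop.eq_one_of_dvd ⟨2, by omega⟩; omega
  have hneg : ((-w : (ZMod M)ˣ) : ZMod M).val = M - v := by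
    rw [Units.val_neg, ZMod.neg_val, if_neg ((ZMod.val_ne_zero _).1 hv0)]
  have hvM : v < M := ZMod.val_lt _
  simp only [halfUnits, mem_filter, mem_univ, true_and]
  rcases Nat.lt_or_gt_of_ne hv2 with h | h
  · refine ⟨w, ⟨h, Or.inl rfl⟩, ?_⟩
    rintro u ⟨hu, rfl | rfl⟩
    · rfl
    · rw [hneg] at hu; omega
  · refine ⟨-w, ⟨by rw [hneg]; omega, Or.inr rfl⟩, ?_⟩
    rintro u ⟨hu, rfl | rfl⟩
    · omega
    · rfl

lemma Nat.gcd_mul_eq_self_iff_coprime {N d : ℕ} (hd : d ∣ N) (hd0 : 0 < d) (q : ℕ) :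
    Nat.gcd (d * q) N = d ↔ q.Coprime (N / d) := by
  conv_lhs => rw [← Nat.mul_div_cancel' hd, Nat.gcd_mul_left]
  exact Nat.mul_eq_left hd0.ne'

lemma image_gcdLevel {N : ℕ} (hN : 0 < N) :
    univ.image (gcdLevel N) = (N.divisors.filter fun d => 2 < N / d).image OrderDual.toDual := by
  ext x
  simp only [gcdLevel, mem_image, mem_univ, true_and, mem_filter, Nat.mem_divisors]
  constructor
  · rintro ⟨m, rfl⟩
    have hg := Nat.gcd_dvd_right ((m : ℕ) + 1) N
    have hgm : Nat.gcd ((m : ℕ) + 1) N ≤ (m : ℕ) + 1 := Nat.gcd_le_left N (Nat.succ_pos m)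
    refine ⟨_, ⟨⟨hg, hN.ne'⟩, ?_⟩, rfl⟩
    rw [Nat.lt_div_iff_mul_lt' hg]
    omega
  · rintro ⟨d, ⟨⟨hd, -⟩, hd2⟩, rfl⟩
    rw [Nat.lt_div_iff_mul_lt' hd] at hd2
    have hd0 := Nat.pos_of_dvd_of_pos hd hN
    refine ⟨⟨d - 1, by omega⟩, ?_⟩
    rw [Nat.sub_add_cancel hd0, Nat.gcd_eq_left hd]

lemma exists_gcdLevel_eq_of_mem_halfUnits {N d : ℕ} [NeZero (N / d)] (hd : d ∣ N) (hN : 0 < N)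
    (hNd : 1 < N / d) {u : (ZMod (N / d))ˣ} (hu : u ∈ halfUnits (N / d)) :
    ∃ m, gcdLevel N m = OrderDual.toDual d ∧ d * (u : ZMod (N / d)).val = (m : ℕ) + 1 := by
  have hd0 : 0 < d := Nat.pos_of_dvd_of_pos hd hN
  have hu2 : 2 * (u : ZMod (N / d)).val < N / d := by simpa [halfUnits] using hu
  have hcop := ZMod.val_coe_unit_coprime u
  set v := (u : ZMod (N / d)).val
  have hv0 : v ≠ 0 := fun h => by rw [h, Nat.coprime_zero_left] at hcop; omega
  have hdv : 2 * (d * v) < N := by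
    rw [mul_left_comm, ← Nat.mul_div_cancel' hd]
    exact Nat.mul_lt_mul_of_pos_left hu2 hd0
  have hdv1 : 1 ≤ d * v := Nat.one_le_iff_ne_zero.2 (Nat.mul_ne_zero hd0.ne' hv0)
  refine ⟨⟨d * v - 1, by omega⟩, ?_, by rw [Fin.val_mk, Nat.sub_add_cancel hdv1]⟩
  rw [gcdLevel, Fin.val_mk, Nat.sub_add_cancel hdv1,
    (Nat.gcd_mul_eq_self_iff_coprime hd hd0 v).2 hcop]

lemma exists_equiv_halfUnits {N d : ℕ} [NeZero (N / d)] (hd : d ∣ N) (hN : 0 < N)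
    (hNd : 1 < N / d) :
    ∃ E : {m // gcdLevel N m = OrderDual.toDual d} ≃ {u // u ∈ halfUnits (N / d)},
      ∀ m, d * ((E m : (ZMod (N / d))ˣ) : ZMod (N / d)).val = (m : ℕ) + 1 := by
  have hd0 : 0 < d := Nat.pos_of_dvd_of_pos hd hN
  have hgcd : ∀ m : {m // gcdLevel N m = OrderDual.toDual d}, Nat.gcd ((m : ℕ) + 1) N = d :=
    fun m => OrderDual.toDual_inj.1 m.2
  have hq : ∀ m : {m // gcdLevel N m = OrderDual.toDual d},
      d * (((m : ℕ) + 1) / d) = (m : ℕ) + 1 := fun m => by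
    have h := Nat.gcd_dvd_left ((m : ℕ) + 1) N
    rw [hgcd m] at h
    exact Nat.mul_div_cancel' h
  have hcop : ∀ m : {m // gcdLevel N m = OrderDual.toDual d},
      (((m : ℕ) + 1) / d).Coprime (N / d) := fun m => by
    have h := Nat.coprime_div_gcd_div_gcd (Nat.gcd_pos_of_pos_right ((m : ℕ) + 1) hN)
    rwa [hgcd m] at h
  have hlt : ∀ m : {m // gcdLevel N m = OrderDual.toDual d},
      2 * (((m : ℕ) + 1) / d) < N / d := fun m => by
    have := m.1.2
    refine Nat.lt_of_mul_lt_mul_left (a := d) ?_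
    rw [Nat.mul_div_cancel' hd, mul_left_comm, hq m]
    omega
  have hval : ∀ m : {m // gcdLevel N m = OrderDual.toDual d},
      ((((m : ℕ) + 1) / d : ℕ) : ZMod (N / d)).val = ((m : ℕ) + 1) / d := fun m =>
    ZMod.val_cast_of_lt (by have := hlt m; omega)
  let f : {m // gcdLevel N m = OrderDual.toDual d} → {u // u ∈ halfUnits (N / d)} := fun m =>
    ⟨ZMod.unitOfCoprime _ (hcop m), by
      simp only [halfUnits, mem_filter, mem_univ, true_and, ZMod.coe_unitOfCoprime, hval, hlt]⟩
  have hf : ∀ m, d * ((f m : (ZMod (N / d))ˣ) : ZMod (N / d)).val = (m : ℕ) + 1 := fun m => by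
    simp only [f, ZMod.coe_unitOfCoprime, hval, hq]
  have hinj : Function.Injective f := by
    intro m n hmn
    have h := hf m
    rw [hmn, hf n] at h
    exact Subtype.ext (Fin.ext (by omega))
  have hsurj : Function.Surjective f := by
    rintro ⟨u, hu⟩
    obtain ⟨m, hm, hmu⟩ := exists_gcdLevel_eq_of_mem_halfUnits hd hN hNd hu
    refine ⟨⟨m, hm⟩, Subtype.ext (Units.ext (ZMod.val_injective _ ?_))⟩
    exact Nat.eq_of_mul_eq_mul_left hd0 (by rw [hf, hmu])
  exact ⟨Equiv.ofBijective f ⟨hinj, hsurj⟩, hf⟩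

lemma toSquareBlock_sinMatrix_mul_ZMat {N d : ℕ} [NeZero N] [NeZero (N / d)] {z : ZMod N → ℂ}
    (hz : ∀ a, z (-a) = -z a) (hd : d ∣ N)
    (E : {m // gcdLevel N m = OrderDual.toDual d} ≃ {u // u ∈ halfUnits (N / d)})
    (hE : ∀ m, d * ((E m : (ZMod (N / d))ˣ) : ZMod (N / d)).val = (m : ℕ) + 1) :
    ((sinMatrix N).map (fun r => (r : ℂ)) * ZMat N z).toSquareBlock (gcdLevel N)
        (OrderDual.toDual d) =
      (groupMatrix (fun g : (ZMod (N / d))ˣ => (d : ℂ) * zhat N d z g)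
        (halfUnits (N / d))).submatrix E E := by
  have hcast : ∀ m, (ZMod.cast ((((E m : (ZMod (N / d))ˣ) : ZMod (N / d)).val : ZMod N)) :
      ZMod (N / d)) = ((E m : (ZMod (N / d))ˣ) : ZMod (N / d)) ∧
      ((m.1 : ℕ) + 1 : ZMod N) = d * (((E m : (ZMod (N / d))ˣ) : ZMod (N / d)).val : ZMod N) :=
    fun m => ⟨by rw [ZMod.cast_natCast (Nat.div_dvd_of_dvd hd), ZMod.natCast_zmod_val],
      by rw [← Nat.cast_mul, hE m, Nat.cast_succ]⟩
  ext m n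
  rw [Matrix.toSquareBlock_def, Matrix.of_apply, sinMatrix_mul_ZMat_apply hz, (hcast m).2,
    (hcast n).2, sinSum_mul_mul_eq_zhat hd z _ _ _ (hcast n).1, (hcast m).1,
    Matrix.submatrix_apply, groupMatrix, Matrix.of_apply, Units.val_mul]
  ring

/-- `det(S_N·Z_N) = ∏_{d ∣ N, N/d > 2} det G_d`, where for each positive divisor `d`
of `N` with `N_d = N/d > 2` and a chosen set `T_d ⊆ (ℤ/N_dℤ)ˣ` of representatives of
`(ℤ/N_dℤ)ˣ/{±1}`, `G_d` is the matrix indexed by `u, v ∈ T_d` with `(u,v)` entry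
`d·ẑ_d(u·v⁻¹)`. -/
theorem det_sinMatrix_mul_ZMat (N : ℕ) (hN : 2 ≤ N) (z : ZMod N → ℂ)
    (hz : ∀ a : ZMod N, z (-a) = -z a)
    (T : (d : ℕ) → Finset (ZMod (N / d))ˣ)
    (hT : ∀ d ∈ N.divisors.filter (fun d => 2 < N / d), ∀ w : (ZMod (N / d))ˣ,
      ∃! u : (ZMod (N / d))ˣ, u ∈ T d ∧ (u = w ∨ u = -w)) :
    ((sinMatrix N).map (fun r => (r : ℂ)) * ZMat N z).det =
      ∏ d ∈ N.divisors.filter (fun d => 2 < N / d),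
        Matrix.det (Matrix.of fun u v : {u : (ZMod (N / d))ˣ // u ∈ T d} =>
          (d : ℂ) * zhat N d z (((u : (ZMod (N / d))ˣ) * (v : (ZMod (N / d))ˣ)⁻¹ :
            (ZMod (N / d))ˣ) : ZMod (N / d))) := by
  have hN0 : 0 < N := by omega
  have : NeZero N := ⟨hN0.ne'⟩
  rw [(blockTriangular_sinMatrix_mul_ZMat hz).det, image_gcdLevel hN0,
    prod_image OrderDual.toDual.injective.injOn]
  refine prod_congr rfl fun d hdS => ?_
  obtain ⟨⟨hd, -⟩, hNd⟩ := (mem_filter.1 hdS).imp_left Nat.mem_divisors.1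
  have : NeZero (N / d) := ⟨by omega⟩
  obtain ⟨E, hE⟩ := exists_equiv_halfUnits hd hN0 (by omega)
  rw [toSquareBlock_sinMatrix_mul_ZMat hz hd E hE, Matrix.det_submatrix_equiv_self]
  exact det_groupMatrix_eq (fun g => by rw [Units.val_neg, zhat_neg hd, mul_neg])
    (isSignRepresentatives_halfUnits hNd) (hT d hdS)
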